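/- Let A be a real n×d matrix and let Z be a real n×k matrix with orthonormal columns (ZᵀZ = I_k). Then X = ZᵀA minimizes ‖A − ZX‖₂ over all k×d matrices X; that is, for every real k×d matrix X, ‖A − ZZᵀA‖₂ ≤ ‖A − ZX‖₂. -/

import Mathlib

open Matrix

/-- The Euclidean norm of a vector in `ℝ^n`. -/
noncomputable def euclNorm {n : ℕ} (x : Fin n → ℝ) : ℝ := Real.sqrt (∑ i, (x i) ^ 2)

/-- The spectral norm of a real matrix: `sup_{x ≠ 0} ‖Mx‖₂ / ‖x‖₂`. -/
noncomputable def specNorm {m n : ℕ} (M : Matrix (Fin m) (Fin n) ℝ) : ℝ :=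
  sSup ((fun x : Fin n → ℝ => euclNorm (M.mulVec x) / euclNorm x) '' {x | x ≠ 0})

/-!
The residual `A - Z Zᵀ A` is orthogonal to the column space of `Z`, so for every `x` the vector
`(A - Z X) x = (A - Z Zᵀ A) x + Z (Zᵀ A - X) x` is an orthogonal sum. By Pythagoras
`‖(A - Z Zᵀ A) x‖ ≤ ‖(A - Z X) x‖` for every `x`, and taking the supremum over `x` gives the claim.
-/

lemma euclNorm_eq_norm_toLp {n : ℕ} (x : Fin n → ℝ) :
    euclNorm x = ‖(WithLp.toLp 2 x : EuclideanSpace ℝ (Fin n))‖ := by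
  simp [euclNorm, EuclideanSpace.norm_eq]

lemma euclNorm_le_euclNorm_add {n : ℕ} {u w : Fin n → ℝ} (h : u ⬝ᵥ w = 0) :
    euclNorm u ≤ euclNorm (u + w) := by
  simp only [euclNorm_eq_norm_toLp, WithLp.toLp_add]
  set u' : EuclideanSpace ℝ (Fin n) := WithLp.toLp 2 u
  set w' : EuclideanSpace ℝ (Fin n) := WithLp.toLp 2 w
  have horth : inner ℝ u' w' = 0 := by
    simpa [u', w', EuclideanSpace.inner_eq_star_dotProduct, dotProduct_comm] using h
  have hpyth := norm_add_sq_eq_norm_sq_add_norm_sq_of_inner_eq_zero u' w' horth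
  nlinarith [norm_nonneg u', norm_nonneg (u' + w')]

lemma exists_euclNorm_mulVec_le {m n : ℕ} (M : Matrix (Fin m) (Fin n) ℝ) :
    ∃ C, 0 ≤ C ∧ ∀ x, euclNorm (M *ᵥ x) ≤ C * euclNorm x := by
  let T := LinearMap.toContinuousLinearMap (toLpLin 2 2 M)
  refine ⟨‖T‖, norm_nonneg T, fun x => ?_⟩
  simpa [euclNorm_eq_norm_toLp, T] using T.le_opNorm (WithLp.toLp 2 x)

lemma specNorm_le_specNorm_of_euclNorm_mulVec_le {m m' n : ℕ} {M : Matrix (Fin m) (Fin n) ℝ}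
    {N : Matrix (Fin m') (Fin n) ℝ} (h : ∀ x, euclNorm (M *ᵥ x) ≤ euclNorm (N *ᵥ x)) :
    specNorm M ≤ specNorm N := by
  obtain ⟨C, hC0, hC⟩ := exists_euclNorm_mulVec_le N
  rw [specNorm, specNorm, Set.image_eq_range, Set.image_eq_range]
  refine ciSup_mono ⟨C, ?_⟩ fun x => div_le_div_of_nonneg_right (h x) (Real.sqrt_nonneg _)
  rintro _ ⟨x, rfl⟩
  -- `C ≥ 0` also covers `euclNorm x = 0`, where the quotient is the junk value `0`.
  exact div_le_of_le_mul₀ (Real.sqrt_nonneg _) hC0 (hC x)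

lemma transpose_mul_sub_mul_transpose_mul_eq_zero {R m n k : Type*} [Ring R] [Fintype n]
    [Fintype k] [DecidableEq k] {Z : Matrix n k R} (hZ : Zᵀ * Z = 1) (A : Matrix n m R) :
    Zᵀ * (A - Z * (Zᵀ * A)) = 0 := by
  rw [Matrix.mul_sub, ← Matrix.mul_assoc, hZ, Matrix.one_mul, sub_self]

/-- `X = ZᵀA` minimizes `‖A − Z X‖₂` over all `k × d` matrices `X`. -/
theorem stmt16 {n d k : ℕ} (A : Matrix (Fin n) (Fin d) ℝ) (Z : Matrix (Fin n) (Fin k) ℝ)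
    (hZ : Zᵀ * Z = 1) (X : Matrix (Fin k) (Fin d) ℝ) :
    specNorm (A - Z * (Zᵀ * A)) ≤ specNorm (A - Z * X) := by
  refine specNorm_le_specNorm_of_euclNorm_mulVec_le fun x => ?_
  have hsplit :
      (A - Z * X) *ᵥ x = (A - Z * (Zᵀ * A)) *ᵥ x + Z *ᵥ ((Zᵀ * A - X) *ᵥ x) := by
    rw [mulVec_mulVec, ← add_mulVec, Matrix.mul_sub]
    abel_nf
  rw [hsplit]
  apply euclNorm_le_euclNorm_add
  rw [dotProduct_mulVec, ← mulVec_transpose, mulVec_mulVec,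
    transpose_mul_sub_mul_transpose_mul_eq_zero hZ, zero_mulVec, zero_dotProduct]
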